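/- The map ν ↦ H(ν | ν⁽¹⁾⊗μ') from probability measures on S×S' to [0,∞] is lower semicontinuous with respect to the weak topology, where ν⁽¹⁾ is the first marginal of ν. -/

import Mathlib

/-!
The proof goes through a variational formula for the Kullback–Leibler divergence of finite
measures, `klDiv ν μ = ⨆ g, ofReal (∫ g ∂ν - ∫ (exp g - 1) ∂μ)` over bounded continuous `g`.
The bound `≤ klDiv ν μ` is the pointwise Fenchel–Young inequality `ρ t - (exp t - 1) ≤ klFun ρ`
for `ρ = dν/dμ`. Conversely, the truncations of `log ρ` recover `∫⁻ klFun ρ ∂μ` by Fatou's lemma,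
and a bounded measurable test function can be replaced by a bounded continuous one that is close
in `L¹(ν + μ)`. For `μ = ν₁ ⊗ μ'` the term `∫ (exp g - 1) ∂μ` equals `∫ φ_g (p.1) ∂ν p` with
`φ_g x = ∫ (exp (g (x, y)) - 1) ∂μ' y` bounded and continuous, so `ν ↦ H(ν | ν₁ ⊗ μ')` is a
supremum of weakly continuous functions of `ν`.
-/

open MeasureTheory ProbabilityTheory Filter Real

open Classical in
/-- Relative entropy `H(ν|μ)`. -/
noncomputable def relEnt {S : Type*} [MeasurableSpace S] (ν μ : Measure S) : EReal :=
  if ν ≪ μ ∧ Integrable (llr ν μ) ν then ((∫ x, llr ν μ x ∂ν : ℝ) : EReal) else ⊤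

open scoped ENNReal Topology BoundedContinuousFunction
open InformationTheory

lemma mul_sub_exp_sub_one_le_klFun {r : ℝ} (hr : 0 ≤ r) (t : ℝ) :
    r * t - (exp t - 1) ≤ klFun r := by
  rcases hr.eq_or_lt with rfl | hr
  · simp [klFun, (exp_pos t).le]
  · have h := add_one_le_exp (t - log r)
    rw [exp_sub, exp_log hr, le_div_iff₀ hr] at h
    rw [klFun]
    linarith

lemma exp_sub_exp_le_exp_mul_abs {a b C : ℝ} (hb : b ≤ C) :
    exp b - exp a ≤ exp C * |b - a| := by
  rcases le_total a b with hab | hab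
  · have h := add_one_le_exp (a - b)
    rw [exp_sub, le_div_iff₀ (exp_pos b)] at h
    have : exp b * (b - a) ≤ exp C * |b - a| :=
      mul_le_mul (exp_le_exp.2 hb) (le_abs_self _) (by linarith) (exp_pos C).le
    nlinarith
  · have := exp_le_exp.2 hab
    have := mul_nonneg (exp_pos C).le (abs_nonneg (b - a))
    linarith

-- Clamping `r` rather than `log r` makes `log (clampExp n 0) = -n → -∞`, whereas `Real.log 0 = 0`.
noncomputable def clampExp (n : ℕ) (r : ℝ) : ℝ := max (min r (exp n)) (exp (-n))

lemma clampExp_pos (n : ℕ) (r : ℝ) : 0 < clampExp n r :=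
  lt_max_of_lt_right (exp_pos _)

lemma continuous_clampExp (n : ℕ) : Continuous (clampExp n) := by
  unfold clampExp; fun_prop

lemma abs_log_clampExp_le (n : ℕ) (r : ℝ) : |log (clampExp n r)| ≤ n := by
  have hge : exp (-n) ≤ clampExp n r := le_max_right _ _
  have hle : clampExp n r ≤ exp n :=
    max_le (min_le_right _ _) (exp_le_exp.2 (by linarith [n.cast_nonneg (α := ℝ)]))
  have h1 := log_le_log (exp_pos _) hge
  have h2 := log_le_log (clampExp_pos n r) hle
  rw [log_exp] at h1 h2
  exact abs_le.2 ⟨h1, h2⟩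

lemma sub_mul_log_clampExp_nonneg (n : ℕ) (r : ℝ) :
    0 ≤ (r - clampExp n r) * log (clampExp n r) := by
  have h1 : 1 ≤ exp n := one_le_exp n.cast_nonneg
  have h2 : exp (-n) ≤ 1 := exp_le_one_iff.2 (by simp)
  rcases le_total 1 r with hr | hr
  · have hc1 : 1 ≤ clampExp n r := le_max_of_le_left (le_min hr h1)
    have hcr : clampExp n r ≤ r := max_le (min_le_left _ _) (h2.trans hr)
    exact mul_nonneg (sub_nonneg.2 hcr) (log_nonneg hc1)
  · have hc1 : clampExp n r ≤ 1 := max_le ((min_le_left _ _).trans hr) h2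
    have hcr : r ≤ clampExp n r := le_max_of_le_left (le_min le_rfl (hr.trans h1))
    exact mul_nonneg_of_nonpos_of_nonpos (sub_nonpos.2 hcr) (log_nonpos (clampExp_pos n r).le hc1)

lemma mul_log_clampExp_sub_nonneg (n : ℕ) (r : ℝ) :
    0 ≤ r * log (clampExp n r) - (clampExp n r - 1) := by
  have h : r * log (clampExp n r) - (clampExp n r - 1)
      = (r - clampExp n r) * log (clampExp n r) + klFun (clampExp n r) := by
    rw [klFun]; ring
  rw [h]
  exact add_nonneg (sub_mul_log_clampExp_nonneg n r) (klFun_nonneg (clampExp_pos n r).le)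

lemma tendsto_clampExp {r : ℝ} (hr : 0 ≤ r) :
    Tendsto (fun n : ℕ => clampExp n r) atTop (𝓝 r) := by
  have hexp : Tendsto (fun n : ℕ => exp (-n)) atTop (𝓝 0) :=
    tendsto_exp_neg_atTop_nhds_zero.comp tendsto_natCast_atTop_atTop
  have hmin : ∀ᶠ n : ℕ in atTop, min r (exp n) = r :=
    ((tendsto_exp_atTop.comp tendsto_natCast_atTop_atTop).eventually_ge_atTop r).mono
      fun n hn => min_eq_left hn
  have hmax := (tendsto_const_nhds (x := r)).max hexp
  rw [max_eq_left hr] at hmax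
  exact hmax.congr' (hmin.mono fun n hn => by simp only [clampExp, hn])

lemma tendsto_mul_log_clampExp_sub {r : ℝ} (hr : 0 ≤ r) :
    Tendsto (fun n : ℕ => r * log (clampExp n r) - (clampExp n r - 1)) atTop (𝓝 (klFun r)) := by
  have hlog : Tendsto (fun n : ℕ => r * log (clampExp n r)) atTop (𝓝 (r * log r)) := by
    rcases hr.eq_or_lt with rfl | hr
    · simp
    · exact ((continuousAt_log hr.ne').tendsto.comp (tendsto_clampExp hr.le)).const_mul r
  convert hlog.sub ((tendsto_clampExp hr).sub_const 1) using 2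
  rw [klFun]; ring

section KlDual

variable {α : Type*} {mα : MeasurableSpace α} {ν μ : Measure α} {f g : α → ℝ} {C : ℝ}

noncomputable def klDual (ν μ : Measure α) (f : α → ℝ) : ℝ :=
  ∫ x, f x ∂ν - ∫ x, (exp (f x) - 1) ∂μ

lemma ofReal_integral_le_lintegral_ofReal (f : α → ℝ) :
    ENNReal.ofReal (∫ x, f x ∂μ) ≤ ∫⁻ x, ENNReal.ofReal (f x) ∂μ := by
  by_cases hf : Integrable f μ
  · calc ENNReal.ofReal (∫ x, f x ∂μ)
        ≤ ENNReal.ofReal (∫ x, max (f x) 0 ∂μ) :=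
          ENNReal.ofReal_le_ofReal (integral_mono hf hf.pos_part fun x => le_max_left _ _)
      _ = ∫⁻ x, ENNReal.ofReal (max (f x) 0) ∂μ :=
          ofReal_integral_eq_lintegral_ofReal hf.pos_part (ae_of_all _ fun x => le_max_right _ _)
      _ = ∫⁻ x, ENNReal.ofReal (f x) ∂μ := by simp [ENNReal.ofReal_max]
  · simp [integral_undef hf]

lemma klDual_indicator_const {A : Set α} (hA : MeasurableSet A) (hμA : μ A = 0) (t : ℝ) :
    klDual ν μ (A.indicator fun _ => t) = ν.real A * t := by
  have hexp : ∫ x, (exp (A.indicator (fun _ => t) x) - 1) ∂μ = 0 :=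
    integral_eq_zero_of_ae ((measure_eq_zero_iff_ae_notMem.1 hμA).mono fun x hx => by simp [hx])
  rw [klDual, integral_indicator_const _ hA, hexp, smul_eq_mul, sub_zero]

lemma integrable_of_abs_le [IsFiniteMeasure μ] (hf : Measurable f) (hb : ∀ x, |f x| ≤ C) :
    Integrable f μ :=
  .of_bound hf.aestronglyMeasurable C (ae_of_all _ hb)

lemma integrable_exp_sub_one [IsFiniteMeasure μ] (hf : Measurable f) (hb : ∀ x, |f x| ≤ C) :
    Integrable (fun x => exp (f x) - 1) μ := by
  refine (integrable_of_abs_le (hf.exp) (C := exp C) fun x => ?_).sub (integrable_const 1)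
  rw [abs_of_pos (exp_pos _)]
  exact exp_le_exp.2 ((le_abs_self _).trans (hb x))

variable [IsFiniteMeasure ν]

lemma eq_top_of_forall_ofReal_klDual_le (hνμ : ¬ ν ≪ μ) {c : ℝ≥0∞}
    (h : ∀ f C, Measurable f → (∀ x, |f x| ≤ C) → ENNReal.ofReal (klDual ν μ f) ≤ c) :
    c = ∞ := by
  obtain ⟨A, hA, hμA, hνA⟩ : ∃ A, MeasurableSet A ∧ μ A = 0 ∧ ν A ≠ 0 := by
    by_contra! hA
    exact hνμ (.mk fun A hA' hμA => hA A hA' hμA)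
  have hνA' : 0 < ν.real A := ENNReal.toReal_pos hνA (measure_ne_top ν A)
  refine ENNReal.eq_top_of_forall_nnreal_le fun r => ?_
  have hr : 0 ≤ (r : ℝ) / ν.real A := by positivity
  have := h (A.indicator fun _ => r / ν.real A) (r / ν.real A) (measurable_const.indicator hA)
    fun x => by by_cases hx : x ∈ A <;> simp [hx, abs_of_nonneg hr, hr]
  rwa [klDual_indicator_const hA hμA, mul_div_cancel₀ _ hνA'.ne', ENNReal.ofReal_coe_nnreal] at this

variable [IsFiniteMeasure μ]

lemma integrable_rnDeriv_mul (hνμ : ν ≪ μ) (hf : Measurable f) (hb : ∀ x, |f x| ≤ C) :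
    Integrable (fun x => (ν.rnDeriv μ x).toReal * f x) μ :=
  (integrable_rnDeriv_smul_iff hνμ).2 (integrable_of_abs_le hf hb)

lemma klDual_eq_integral_rnDeriv (hνμ : ν ≪ μ) (hf : Measurable f) (hb : ∀ x, |f x| ≤ C) :
    klDual ν μ f = ∫ x, ((ν.rnDeriv μ x).toReal * f x - (exp (f x) - 1)) ∂μ := by
  rw [klDual, integral_sub (integrable_rnDeriv_mul hνμ hf hb) (integrable_exp_sub_one hf hb),
    ← integral_rnDeriv_smul hνμ]
  rfl

lemma ofReal_klDual_le_klDiv (hf : Measurable f) (hb : ∀ x, |f x| ≤ C) :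
    ENNReal.ofReal (klDual ν μ f) ≤ klDiv ν μ := by
  by_cases hνμ : ν ≪ μ
  · rw [klDual_eq_integral_rnDeriv hνμ hf hb, klDiv_eq_lintegral_klFun_of_ac hνμ]
    refine (ofReal_integral_le_lintegral_ofReal _).trans (lintegral_mono fun x => ?_)
    exact ENNReal.ofReal_le_ofReal (mul_sub_exp_sub_one_le_klFun ENNReal.toReal_nonneg _)
  · simp [hνμ]

lemma klDiv_le_of_forall_ofReal_klDual_le {c : ℝ≥0∞}
    (h : ∀ f C, Measurable f → (∀ x, |f x| ≤ C) → ENNReal.ofReal (klDual ν μ f) ≤ c) :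
    klDiv ν μ ≤ c := by
  by_cases hνμ : ¬ ν ≪ μ
  · simp [eq_top_of_forall_ofReal_klDual_le hνμ h]
  rw [not_not] at hνμ
  set ρ : α → ℝ := fun x => (ν.rnDeriv μ x).toReal
  have hρ : Measurable ρ := (Measure.measurable_rnDeriv ν μ).ennreal_toReal
  set G : ℕ → α → ℝ := fun n x => ρ x * log (clampExp n (ρ x)) - (clampExp n (ρ x) - 1)
  have hfn : ∀ n, Measurable fun x => log (clampExp n (ρ x)) :=
    fun n => ((continuous_clampExp n).measurable.comp hρ).log
  have hG : ∀ n, ENNReal.ofReal (klDual ν μ fun x => log (clampExp n (ρ x)))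
      = ∫⁻ x, ENNReal.ofReal (G n x) ∂μ := by
    intro n
    have hb := fun x => abs_log_clampExp_le n (ρ x)
    have hint := (integrable_rnDeriv_mul hνμ (hfn n) hb).sub
      (integrable_exp_sub_one (μ := μ) (hfn n) hb)
    rw [klDual_eq_integral_rnDeriv hνμ (hfn n) hb]
    simp only [exp_log (clampExp_pos _ _)] at hint ⊢
    exact ofReal_integral_eq_lintegral_ofReal hint
      (ae_of_all _ fun x => mul_log_clampExp_sub_nonneg n _)
  calc klDiv ν μ = ∫⁻ x, liminf (fun n => ENNReal.ofReal (G n x)) atTop ∂μ := by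
        rw [klDiv_eq_lintegral_klFun_of_ac hνμ]
        refine lintegral_congr fun x => ?_
        exact (((ENNReal.continuous_ofReal.tendsto _).comp
          (tendsto_mul_log_clampExp_sub ENNReal.toReal_nonneg))).liminf_eq.symm
    _ ≤ liminf (fun n => ∫⁻ x, ENNReal.ofReal (G n x) ∂μ) atTop :=
        lintegral_liminf_le fun n => ((hρ.mul (hfn n)).sub
          (((continuous_clampExp n).measurable.comp hρ).sub_const 1)).ennreal_ofReal
    _ ≤ c := liminf_le_of_frequently_le' (Frequently.of_forall fun n =>
        hG n ▸ h _ _ (hfn n) fun x => abs_log_clampExp_le n (ρ x))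

lemma klDual_sub_klDual_le (hf : Measurable f) (hfb : ∀ x, |f x| ≤ C) (hg : Measurable g)
    (hgb : ∀ x, |g x| ≤ C) :
    klDual ν μ f - klDual ν μ g ≤ (1 + exp C) * ∫ x, |f x - g x| ∂(ν + μ) := by
  have hdiff : ∀ x, |(|f x - g x|)| ≤ C + C := fun x => by
    rw [abs_abs]; exact (abs_sub _ _).trans (add_le_add (hfb x) (hgb x))
  have hint : ∀ (m : Measure α) [IsFiniteMeasure m], Integrable (fun x => |f x - g x|) m :=
    fun m _ => integrable_of_abs_le (hf.sub hg).abs hdiff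
  have hν : ∫ x, (f x - g x) ∂ν ≤ ∫ x, |f x - g x| ∂ν :=
    integral_mono ((integrable_of_abs_le hf hfb).sub (integrable_of_abs_le hg hgb)) (hint ν)
      fun x => le_abs_self _
  have hμ : ∫ x, (exp (g x) - exp (f x)) ∂μ ≤ exp C * ∫ x, |f x - g x| ∂μ := by
    rw [← integral_const_mul]
    have hexp : Integrable (fun x => exp (g x) - exp (f x)) μ :=
      ((integrable_exp_sub_one hg hgb).sub (integrable_exp_sub_one hf hfb)).congr
        (ae_of_all _ fun x => by simp only [Pi.sub_apply]; ring)
    refine integral_mono hexp ((hint μ).const_mul _) fun x => ?_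
    rw [abs_sub_comm]
    exact exp_sub_exp_le_exp_mul_abs ((le_abs_self _).trans (hgb x))
  have hsplit : klDual ν μ f - klDual ν μ g
      = ∫ x, (f x - g x) ∂ν + ∫ x, (exp (g x) - exp (f x)) ∂μ := by
    have hexp : ∫ x, (exp (g x) - exp (f x)) ∂μ
        = ∫ x, (exp (g x) - 1) ∂μ - ∫ x, (exp (f x) - 1) ∂μ := by
      rw [← integral_sub (integrable_exp_sub_one hg hgb) (integrable_exp_sub_one hf hfb)]
      simp only [sub_sub_sub_cancel_right]
    rw [klDual, klDual, hexp,
      integral_sub (integrable_of_abs_le hf hfb) (integrable_of_abs_le hg hgb)]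
    ring
  rw [hsplit, integral_add_measure (hint ν) (hint μ)]
  have h0 : 0 ≤ ∫ x, |f x - g x| ∂ν := integral_nonneg fun x => abs_nonneg _
  have h1 : 0 ≤ ∫ x, |f x - g x| ∂μ := integral_nonneg fun x => abs_nonneg _
  nlinarith [exp_pos C]

variable [TopologicalSpace α] [TopologicalSpace.PseudoMetrizableSpace α] [BorelSpace α]

lemma exists_boundedContinuous_klDual_le_add (hf : Measurable f) (hb : ∀ x, |f x| ≤ C) {ε : ℝ}
    (hε : 0 < ε) : ∃ g : α →ᵇ ℝ, klDual ν μ f ≤ klDual ν μ g + ε := by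
  have hεC : 0 < ε / (1 + exp C) := by positivity
  have hfint : Integrable f (ν + μ) := integrable_of_abs_le hf hb
  obtain ⟨g₀, hg₀, hg₀int⟩ := hfint.exists_boundedContinuous_integral_sub_le hεC
  let g := g₀ ⊓ .const α C ⊔ .const α (-C)
  have hg : ∀ x, g x = max (min (g₀ x) C) (-C) := fun _ => rfl
  have hgb : ∀ x, |g x| ≤ C := fun x => by
    have := (abs_nonneg _).trans (hb x)
    rw [hg, abs_le]
    exact ⟨le_max_right _ _, max_le (min_le_right _ _) (by linarith)⟩
  have hfg : ∀ x, |f x - g x| ≤ ‖f x - g₀ x‖ := fun x => by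
    obtain ⟨h₁, h₂⟩ := abs_le.1 (hb x)
    calc |f x - g x| = |max (min (f x) C) (-C) - max (min (g₀ x) C) (-C)| := by
          rw [hg, min_eq_left h₂, max_eq_left h₁]
      _ ≤ |min (f x) C - min (g₀ x) C| := abs_max_sub_max_le_abs _ _ _
      _ ≤ |f x - g₀ x| := by simpa using abs_min_sub_min_le_max (f x) C (g₀ x) C
  refine ⟨g, ?_⟩
  have hint : ∫ x, |f x - g x| ∂(ν + μ) ≤ ε / (1 + exp C) :=
    (integral_mono_of_nonneg (ae_of_all _ fun x => abs_nonneg _) (hfint.sub hg₀int).norm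
      (ae_of_all _ hfg)).trans hg₀
  have := klDual_sub_klDual_le (ν := ν) (μ := μ) hf hb g.continuous.measurable hgb
  have := mul_le_mul_of_nonneg_left hint (by positivity : (0 : ℝ) ≤ 1 + exp C)
  rw [mul_div_cancel₀ _ (by positivity)] at this
  linarith

theorem klDiv_eq_iSup_klDual : klDiv ν μ = ⨆ g : α →ᵇ ℝ, ENNReal.ofReal (klDual ν μ g) := by
  refine le_antisymm (klDiv_le_of_forall_ofReal_klDual_le fun f C hf hb => ?_)
    (iSup_le fun g => ofReal_klDual_le_klDiv (C := ‖g‖) g.continuous.measurable fun x => ?_)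
  · refine ENNReal.le_of_forall_pos_le_add fun ε hε _ => ?_
    obtain ⟨g, hg⟩ := exists_boundedContinuous_klDual_le_add (ν := ν) (μ := μ) hf hb hε
    calc ENNReal.ofReal (klDual ν μ f) ≤ ENNReal.ofReal (klDual ν μ g) + ε := by
          simpa using (ENNReal.ofReal_le_ofReal hg).trans (ENNReal.ofReal_add_le)
      _ ≤ (⨆ g : α →ᵇ ℝ, ENNReal.ofReal (klDual ν μ g)) + ε :=
          add_le_add_left (le_iSup (fun g : α →ᵇ ℝ => ENNReal.ofReal (klDual ν μ g)) g) _
  · exact g.norm_coe_le_norm x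

end KlDual

lemma relEnt_eq_klDiv {α : Type*} [MeasurableSpace α] {ν μ : Measure α} [IsFiniteMeasure ν]
    [IsFiniteMeasure μ] (h : ν Set.univ = μ Set.univ) : relEnt ν μ = klDiv ν μ := by
  by_cases hνμ : ν ≪ μ ∧ Integrable (llr ν μ) ν
  · rw [relEnt, if_pos hνμ, ← toReal_klDiv_of_measure_eq hνμ.1 h,
      EReal.coe_ennreal_toReal (klDiv_ne_top hνμ.1 hνμ.2)]
  · rw [relEnt, if_neg hνμ, klDiv_eq_top_iff.2 fun h₁ h₂ => hνμ ⟨h₁, h₂⟩, EReal.coe_ennreal_top]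

namespace BoundedContinuousFunction

variable {S S' : Type*} [TopologicalSpace S] [TopologicalSpace S']

noncomputable def expSubOne (f : S →ᵇ ℝ) : S →ᵇ ℝ :=
  ofNormedAddCommGroup (fun x => exp (f x) - 1) (by fun_prop) (exp ‖f‖ + 1) fun x =>
    (norm_sub_le _ _).trans (by
      simpa [abs_of_pos (exp_pos _)] using
        exp_le_exp.2 ((le_abs_self _).trans (f.norm_coe_le_norm x)))

variable [FirstCountableTopology S] [MeasurableSpace S'] [OpensMeasurableSpace S']
  (μ' : Measure S') [IsFiniteMeasure μ']

noncomputable def integralSnd (h : S × S' →ᵇ ℝ) : S →ᵇ ℝ :=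
  ofNormedAddCommGroup (fun x => ∫ y, h (x, y) ∂μ')
    (continuous_of_dominated
      (fun x => (h.continuous.comp (Continuous.prodMk_right x)).aestronglyMeasurable)
      (fun x => ae_of_all _ fun y => h.norm_coe_le_norm (x, y)) (integrable_const ‖h‖)
      (ae_of_all _ fun y => h.continuous.comp (Continuous.prodMk_left y)))
    (‖h‖ * μ'.real Set.univ) fun _ =>
      norm_integral_le_of_norm_le_const (ae_of_all _ fun _ => h.norm_coe_le_norm _)

end BoundedContinuousFunction

section Conditional

variable {S S' : Type*} [TopologicalSpace S] [FirstCountableTopology S] [TopologicalSpace S']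
  [MeasurableSpace S'] [OpensMeasurableSpace S'] (μ' : Measure S') [IsFiniteMeasure μ']

noncomputable def condKlDualIntegrand (f : S × S' →ᵇ ℝ) : S × S' →ᵇ ℝ :=
  f - (f.expSubOne.integralSnd μ').compContinuous ContinuousMap.fst

lemma klDual_map_fst_prod [MeasurableSpace S] [OpensMeasurableSpace S]
    [OpensMeasurableSpace (S × S')] (ν : Measure (S × S')) [IsFiniteMeasure ν] (f : S × S' →ᵇ ℝ) :
    klDual ν ((ν.map Prod.fst).prod μ') f = ∫ p, condKlDualIntegrand μ' f p ∂ν := by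
  have hexp : ∫ p, (exp (f p) - 1) ∂(ν.map Prod.fst).prod μ'
      = ∫ p, f.expSubOne.integralSnd μ' p.1 ∂ν := by
    rw [integral_prod (fun p => exp (f p) - 1) (f.expSubOne.integrable _)]
    exact integral_map measurable_fst.aemeasurable
      (f.expSubOne.integralSnd μ').continuous.aestronglyMeasurable
  rw [klDual, hexp]
  exact (integral_sub (f.integrable ν) (BoundedContinuousFunction.integrable ν
    ((f.expSubOne.integralSnd μ').compContinuous ContinuousMap.fst))).symm

end Conditional

/-- The map `ν ↦ H(ν | ν⁽¹⁾ ⊗ μ')` is lower semicontinuous in the weak topology on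
probability measures on `S × S'`. -/
theorem lowerSemicontinuous_relEnt_cond {S S' : Type*}
    [MeasurableSpace S] [TopologicalSpace S] [PolishSpace S] [BorelSpace S]
    [MeasurableSpace S'] [TopologicalSpace S'] [PolishSpace S'] [BorelSpace S']
    (μ' : Measure S') [IsProbabilityMeasure μ'] :
    LowerSemicontinuous (fun ν : ProbabilityMeasure (S × S') =>
      relEnt (ν : Measure (S × S')) (((ν : Measure (S × S')).map Prod.fst).prod μ')) := by
  have hvar : ∀ ν : ProbabilityMeasure (S × S'),
      relEnt (ν : Measure (S × S')) (((ν : Measure (S × S')).map Prod.fst).prod μ')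
        = ((⨆ f : S × S' →ᵇ ℝ,
            ENNReal.ofReal (∫ p, condKlDualIntegrand μ' f p ∂(ν : Measure (S × S'))) : ℝ≥0∞) :
              EReal) := by
    intro ν
    have hmass : (ν : Measure (S × S')) Set.univ
        = (((ν : Measure (S × S')).map Prod.fst).prod μ') Set.univ := by
      rw [← Set.univ_prod_univ, Measure.prod_prod, Measure.map_apply measurable_fst .univ]
      simp
    rw [relEnt_eq_klDiv hmass, klDiv_eq_iSup_klDual]
    simp_rw [klDual_map_fst_prod]
  simp_rw [hvar]
  refine continuous_coe_ennreal_ereal.comp_lowerSemicontinuous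
    (lowerSemicontinuous_iSup fun f => ?_) fun _ _ h => EReal.coe_ennreal_le_coe_ennreal_iff.2 h
  exact (ENNReal.continuous_ofReal.comp
    (ProbabilityMeasure.continuous_integral_boundedContinuousFunction _)).lowerSemicontinuous
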